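/- The sublevel set of a feasible barrier function inner-approximates the complement of the backward reachable set: Let f : ℝⁿ × ℝᵐ → ℝⁿ, let X ⊆ ℝⁿ, X_U ⊆ X, X_S = X \ X_U, D ⊆ ℝᵐ, and let B : ℝⁿ → ℝ be differentiable with (i) B(x) > 0 for all x ∈ X_U and (ii) the derivative of B at x applied to f(x,d) nonpositive for all (x,d) ∈ X × D. Define the invariant backward reachable set X_B* as the set of points x₀ ∈ X from which some trajectory remaining in X reaches X_U in finite time. Then {x ∈ X_S : B(x) ≤ 0} ⊆ X_S \ X_B*; equivalently, the zero superlevel set {x ∈ X : B(x) > 0} over-approximates X_B*. -/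

import Mathlib

/-!
Along any trajectory that stays in `X`, the chain rule and the decrease condition make
`t ↦ B (x t)` antitone. A trajectory from `x₀` reaching `X_U`, where `B > 0`, therefore
forces `B x₀ > 0`; so no point of the sublevel set `{B ≤ 0}` lies in the backward reachable set.
-/

/-- The invariant backward reachable set of `XU`: points of `X` from which
some trajectory remaining in `X` reaches `XU` in finite time. -/
def BackwardReach {n m : ℕ} (f : (Fin n → ℝ) → (Fin m → ℝ) → (Fin n → ℝ))
    (X XU : Set (Fin n → ℝ)) (D : Set (Fin m → ℝ)) : Set (Fin n → ℝ) :=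
  {x0 ∈ X | ∃ T : ℝ, 0 ≤ T ∧ ∃ x : ℝ → (Fin n → ℝ), ∃ d : ℝ → (Fin m → ℝ),
    (∀ t ∈ Set.Icc (0 : ℝ) T, d t ∈ D) ∧
    (∀ t ∈ Set.Icc (0 : ℝ) T, HasDerivAt x (f (x t) (d t)) t) ∧
    (∀ t ∈ Set.Icc (0 : ℝ) T, x t ∈ X) ∧
    x 0 = x0 ∧ x T ∈ XU}

theorem antitoneOn_comp_of_fderiv_apply_nonpos {E : Type*} [NormedAddCommGroup E]
    [NormedSpace ℝ E] {s : Set ℝ} (hs : Convex ℝ s) {B : E → ℝ} {x v : ℝ → E}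
    (hB : ∀ t ∈ s, DifferentiableAt ℝ B (x t)) (hx : ∀ t ∈ s, HasDerivAt x (v t) t)
    (hBx : ∀ t ∈ s, fderiv ℝ B (x t) (v t) ≤ 0) : AntitoneOn (B ∘ x) s := by
  have hderiv : ∀ t ∈ s, HasDerivAt (B ∘ x) (fderiv ℝ B (x t) (v t)) t :=
    fun t ht ↦ (hB t ht).hasFDerivAt.comp_hasDerivAt t (hx t ht)
  exact antitoneOn_of_hasDerivWithinAt_nonpos hs
    (fun t ht ↦ (hderiv t ht).continuousAt.continuousWithinAt)
    (fun t ht ↦ (hderiv t (interior_subset ht)).hasDerivWithinAt)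
    (fun t ht ↦ hBx t (interior_subset ht))

theorem pos_of_mem_backwardReach {n m : ℕ} {f : (Fin n → ℝ) → (Fin m → ℝ) → (Fin n → ℝ)}
    {X XU : Set (Fin n → ℝ)} {D : Set (Fin m → ℝ)} {B : (Fin n → ℝ) → ℝ}
    (hB : Differentiable ℝ B) (hBU : ∀ x ∈ XU, B x > 0)
    (hBdec : ∀ x ∈ X, ∀ δ ∈ D, fderiv ℝ B x (f x δ) ≤ 0) {x₀ : Fin n → ℝ}
    (hx₀ : x₀ ∈ BackwardReach f X XU D) : 0 < B x₀ := by
  obtain ⟨-, T, hT, x, d, hd, hderiv, hX, rfl, hxT⟩ := hx₀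
  have hanti : AntitoneOn (B ∘ x) (Set.Icc 0 T) :=
    antitoneOn_comp_of_fderiv_apply_nonpos (convex_Icc 0 T) (fun t _ ↦ hB (x t)) hderiv
      fun t ht ↦ hBdec (x t) (hX t ht) (d t) (hd t ht)
  calc 0 < B (x T) := hBU (x T) hxT
    _ ≤ B (x 0) := hanti (Set.left_mem_Icc.mpr hT) (Set.right_mem_Icc.mpr hT) hT

theorem barrier_sublevel_inner_approx_general {n m : ℕ}
    (f : (Fin n → ℝ) → (Fin m → ℝ) → (Fin n → ℝ))
    (X XU : Set (Fin n → ℝ)) (D : Set (Fin m → ℝ))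
    (B : (Fin n → ℝ) → ℝ) (hB : Differentiable ℝ B)
    (hBU : ∀ x ∈ XU, B x > 0)
    (hBdec : ∀ x ∈ X, ∀ δ ∈ D, fderiv ℝ B x (f x δ) ≤ 0) :
    {y ∈ X \ XU | B y ≤ 0} ⊆ (X \ XU) \ BackwardReach f X XU D := by
  rintro y ⟨hyS, hBy⟩
  exact ⟨hyS, fun hy ↦ (pos_of_mem_backwardReach hB hBU hBdec hy).not_ge hBy⟩

/-- The sublevel set of a feasible barrier function inner-approximates the
complement of the backward reachable set. -/
theorem barrier_sublevel_inner_approx {n m : ℕ}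
    (f : (Fin n → ℝ) → (Fin m → ℝ) → (Fin n → ℝ))
    (X XU : Set (Fin n → ℝ)) (hXU : XU ⊆ X) (D : Set (Fin m → ℝ))
    (B : (Fin n → ℝ) → ℝ) (hB : Differentiable ℝ B)
    (hBU : ∀ x ∈ XU, B x > 0)
    (hBdec : ∀ x ∈ X, ∀ δ ∈ D, fderiv ℝ B x (f x δ) ≤ 0) :
    {y ∈ X \ XU | B y ≤ 0} ⊆ (X \ XU) \ BackwardReach f X XU D :=
  barrier_sublevel_inner_approx_general f X XU D B hB hBU hBdec
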